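/- arXiv:1804.07193 — 5 statements merged into one kernel-verified Lean document; each statement's English description precedes it below -/
import Mathlib

section
/- Fix n ≥ 1 and β > 0. The mellowmax operator mm_β : ℝⁿ → ℝ defined by mm_β(x) = (1/β)·log((1/n)·Σ_{i=1}^n e^{β·xᵢ}) is a non-expansion with respect to the supremum norm: |mm_β(x) − mm_β(y)| ≤ ‖x − y‖_∞ for all x, y ∈ ℝⁿ. (Lemma 4, part 2 of the paper.) -/
/-! Mellowmax is monotone and commutes with adding a constant to every coordinate. Any such map
is a non-expansion for the sup norm: coordinatewise `x ≤ y + ‖x - y‖`, so `f x ≤ f y + ‖x - y‖`,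
and symmetrically. -/

open Real

noncomputable def mellowmax {ι : Type*} [Fintype ι] (β : ℝ) (x : ι → ℝ) : ℝ :=
  (1 / β) * log ((1 / Fintype.card ι) * ∑ i, exp (β * x i))

theorem abs_sub_le_norm_sub_of_monotone_of_map_add_const {ι : Type*} [Fintype ι]
    {f : (ι → ℝ) → ℝ} (hf : Monotone f) (hf_add : ∀ x c, f (x + fun _ => c) = f x + c)
    (x y : ι → ℝ) : |f x - f y| ≤ ‖x - y‖ := by
  have key : ∀ x y : ι → ℝ, f x ≤ f y + ‖x - y‖ := fun x y => by
    rw [← hf_add]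
    refine hf fun i => ?_
    have := (le_abs_self _).trans (norm_le_pi_norm (x - y) i)
    simp only [Pi.add_apply, Pi.sub_apply] at this ⊢
    linarith
  rw [abs_sub_le_iff]
  constructor
  · linarith [key x y]
  · linarith [key y x, norm_sub_rev x y]

section

variable {ι : Type*} [Fintype ι] [Nonempty ι] {β : ℝ}

theorem mellowmax_monotone (hβ : 0 < β) : Monotone (mellowmax (ι := ι) β) := by
  intro x y hxy
  unfold mellowmax
  gcongr with i
  exact hxy i

theorem mellowmax_add_const (hβ : β ≠ 0) (x : ι → ℝ) (c : ℝ) :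
    mellowmax β (x + fun _ => c) = mellowmax β x + c := by
  have hS : 0 < (1 / (Fintype.card ι : ℝ)) * ∑ i, exp (β * x i) := by positivity
  have hsum : ∑ i, exp (β * (x i + c)) = exp (β * c) * ∑ i, exp (β * x i) := by
    simp only [mul_add, exp_add, Finset.mul_sum, mul_comm]
  simp only [mellowmax, Pi.add_apply]
  rw [hsum, mul_left_comm, log_mul (exp_pos _).ne' hS.ne', log_exp]
  field_simp
  ring

end

theorem mellowmax_nonexpansion_general (n : ℕ) (β : ℝ) (hβ : 0 < β)
    (x y : Fin n → ℝ) :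
    |(1 / β) * Real.log ((1 / n) * ∑ i, Real.exp (β * x i)) -
     (1 / β) * Real.log ((1 / n) * ∑ i, Real.exp (β * y i))| ≤ ‖x - y‖ := by
  rcases isEmpty_or_nonempty (Fin n) with hn | hn
  · simp [Subsingleton.elim x y]
  · simpa only [mellowmax, Fintype.card_fin] using
      abs_sub_le_norm_sub_of_monotone_of_map_add_const (mellowmax_monotone hβ)
        (mellowmax_add_const hβ.ne') x y

/-- **Lemma 4, part 2.** The mellowmax operator
`mm_β(x) = (1/β)·log((1/n)·Σᵢ exp(β·xᵢ))` is a non-expansion in the supremum norm. -/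
theorem mellowmax_nonexpansion (n : ℕ) (hn : 1 ≤ n) (β : ℝ) (hβ : 0 < β)
    (x y : Fin n → ℝ) :
    |(1 / β) * Real.log ((1 / n) * ∑ i, Real.exp (β * x i)) -
     (1 / β) * Real.log ((1 / n) * ∑ i, Real.exp (β * y i))| ≤ ‖x - y‖ :=
  mellowmax_nonexpansion_general n β hβ x y
end

section
/- Fix n ≥ 1, β > 0, and V_max ≥ 0. Define the Boltzmann softmax operator boltz_β : ℝⁿ → ℝ by boltz_β(x) = (Σᵢ xᵢ·e^{β·xᵢ}) / (Σᵢ e^{β·xᵢ}). Then for all x, y ∈ ℝⁿ with ‖x‖_∞ ≤ V_max and ‖y‖_∞ ≤ V_max, |boltz_β(x) − boltz_β(y)| ≤ (√n + β·V_max·n)·‖x − y‖_∞. (Lemma 4, part 3 of the paper.) -/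
-- For w ≥ 0 : exp w - 1 ≤ w * (exp w + 1) / 2
lemma exp_sub_one_le_aux (w : ℝ) (hw : 0 ≤ w) :
    Real.exp w - 1 ≤ w * (Real.exp w + 1) / 2 := by
  set f : ℝ → ℝ := fun w => w * (Real.exp w + 1) / 2 - (Real.exp w - 1) with hf
  have hdf : ∀ w : ℝ, HasDerivAt f
      ((1 * (Real.exp w + 1) + w * Real.exp w) / 2 - Real.exp w) w := by
    intro w
    have h1 : HasDerivAt (fun w : ℝ => w) 1 w := hasDerivAt_id w
    have h2 : HasDerivAt Real.exp (Real.exp w) w := Real.hasDerivAt_exp w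
    exact ((h1.mul (h2.add_const 1)).div_const 2).sub (h2.sub_const 1)
  have hmono : MonotoneOn f (Set.Ici (0:ℝ)) := by
    apply monotoneOn_of_deriv_nonneg (convex_Ici 0)
    · exact fun z _ => ((hdf z).continuousAt).continuousWithinAt
    · intro z hz
      exact ((hdf z).differentiableAt).differentiableWithinAt
    · intro z hz
      rw [(hdf z).deriv]
      have hz0 : 0 ≤ z := le_of_lt (by simpa using hz)
      have h3 : (1:ℝ) - z ≤ Real.exp (-z) := by
        have := Real.add_one_le_exp (-z); linarith
      have h4 : (1 - z) * Real.exp z ≤ 1 := by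
        have := mul_le_mul_of_nonneg_right h3 (Real.exp_pos z).le
        rwa [← Real.exp_add, neg_add_cancel, Real.exp_zero] at this
      nlinarith [Real.exp_pos z]
  have h0 : f 0 ≤ f w := hmono (Set.self_mem_Ici) hw hw
  simp [hf] at h0
  linarith

lemma exp_diff_le (u v : ℝ) :
    |Real.exp u - Real.exp v| ≤ |u - v| * (Real.exp u + Real.exp v) / 2 := by
  have key : ∀ a b : ℝ, b ≤ a →
      Real.exp a - Real.exp b ≤ (a - b) * (Real.exp a + Real.exp b) / 2 := by
    intro a b hba
    have h := exp_sub_one_le_aux (a - b) (by linarith)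
    have h2 := mul_le_mul_of_nonneg_left h (Real.exp_pos b).le
    calc Real.exp a - Real.exp b = Real.exp b * (Real.exp (a - b) - 1) := by
          rw [mul_sub, ← Real.exp_add]; ring_nf
      _ ≤ Real.exp b * ((a - b) * (Real.exp (a - b) + 1) / 2) := h2
      _ = (a - b) * (Real.exp a + Real.exp b) / 2 := by
          rw [show Real.exp a = Real.exp b * Real.exp (a - b) by
            rw [← Real.exp_add]; ring_nf]
          ring
  rcases le_total v u with h | h
  · rw [abs_of_nonneg (by have := Real.exp_le_exp.2 h; linarith),
      abs_of_nonneg (by linarith)]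
    exact key u v h
  · rw [abs_of_nonpos (by have := Real.exp_le_exp.2 h; linarith),
      abs_of_nonpos (by linarith)]
    have := key v u h
    linarith [this]

/-- **Lemma 4, part 3.** The Boltzmann softmax operator
`boltz_β(x) = (Σᵢ xᵢ·exp(β·xᵢ)) / (Σᵢ exp(β·xᵢ))` is Lipschitz with constant
`√n + β·V_max·n` with respect to the supremum norm, on the ball `‖x‖_∞ ≤ V_max`. -/
theorem boltzmann_lipschitz (n : ℕ) (hn : 1 ≤ n) (β : ℝ) (hβ : 0 < β)
    (Vmax : ℝ) (hV : 0 ≤ Vmax) (x y : Fin n → ℝ)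
    (hx : ‖x‖ ≤ Vmax) (hy : ‖y‖ ≤ Vmax) :
    |(∑ i, x i * Real.exp (β * x i)) / (∑ i, Real.exp (β * x i)) -
     (∑ i, y i * Real.exp (β * y i)) / (∑ i, Real.exp (β * y i))| ≤
      (Real.sqrt n + β * Vmax * n) * ‖x - y‖ := by
  have hd0 : (0:ℝ) ≤ ‖x - y‖ := norm_nonneg _
  obtain rfl | hn2 : n = 1 ∨ 2 ≤ n := by omega
  · simp only [Fin.sum_univ_one, Nat.cast_one, mul_one, Real.sqrt_one]
    rw [mul_div_cancel_right₀ _ (Real.exp_ne_zero _),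
        mul_div_cancel_right₀ _ (Real.exp_ne_zero _)]
    have h1 : |x 0 - y 0| ≤ ‖x - y‖ := by simpa using norm_le_pi_norm (x - y) 0
    nlinarith [mul_nonneg (mul_nonneg hβ.le hV) hd0]
  · have : Nonempty (Fin n) := ⟨⟨0, by omega⟩⟩
    set d := ‖x - y‖ with hdd
    have hdi : ∀ i, |x i - y i| ≤ d := fun i => by
      simpa using norm_le_pi_norm (x - y) i
    have hxi : ∀ i, |x i| ≤ Vmax := fun i =>
      le_trans (by simpa using norm_le_pi_norm x i) hx
    have hyi : ∀ i, |y i| ≤ Vmax := fun i =>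
      le_trans (by simpa using norm_le_pi_norm y i) hy
    set Sx := ∑ i, Real.exp (β * x i) with hSx
    set Sy := ∑ i, Real.exp (β * y i) with hSy
    have hSxpos : 0 < Sx :=
      Finset.sum_pos (fun i _ => Real.exp_pos _) Finset.univ_nonempty
    have hSypos : 0 < Sy :=
      Finset.sum_pos (fun i _ => Real.exp_pos _) Finset.univ_nonempty
    have hnum : |(∑ i, x i * Real.exp (β * x i)) * Sy
        - (∑ i, y i * Real.exp (β * y i)) * Sx|
        ≤ (1 + 2 * (β * Vmax)) * d * (Sx * Sy) := by
      have expand : (∑ i, x i * Real.exp (β * x i)) * Sy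
          - (∑ i, y i * Real.exp (β * y i)) * Sx
          = ∑ i, ∑ j, ((x i - y i) * Real.exp (β * x i + β * y j)
              + y i * (Real.exp (β * x i + β * y j)
                - Real.exp (β * y i + β * x j))) := by
        rw [hSx, hSy, Finset.sum_mul_sum, Finset.sum_mul_sum,
          ← Finset.sum_sub_distrib]
        refine Finset.sum_congr rfl fun i _ => ?_
        rw [← Finset.sum_sub_distrib]
        refine Finset.sum_congr rfl fun j _ => ?_
        rw [Real.exp_add, Real.exp_add]; ring
      rw [expand]
      have hterm : ∀ i j : Fin n,
          |(x i - y i) * Real.exp (β * x i + β * y j)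
            + y i * (Real.exp (β * x i + β * y j)
              - Real.exp (β * y i + β * x j))|
          ≤ d * Real.exp (β * x i + β * y j)
            + β * Vmax * d * (Real.exp (β * x i + β * y j)
              + Real.exp (β * y i + β * x j)) := by
        intro i j
        have e1 := Real.exp_pos (β * x i + β * y j)
        have e2 := Real.exp_pos (β * y i + β * x j)
        have habs : |(β * x i + β * y j) - (β * y i + β * x j)| ≤ 2 * (β * d) := by
          have h1 : |β * (x i - y i)| ≤ β * d := by
            rw [abs_mul, abs_of_pos hβ]
            exact mul_le_mul_of_nonneg_left (hdi i) hβ.le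
          have h2 : |β * (x j - y j)| ≤ β * d := by
            rw [abs_mul, abs_of_pos hβ]
            exact mul_le_mul_of_nonneg_left (hdi j) hβ.le
          calc |(β * x i + β * y j) - (β * y i + β * x j)|
              = |β * (x i - y i) - β * (x j - y j)| := by ring_nf
            _ ≤ |β * (x i - y i)| + |β * (x j - y j)| := abs_sub _ _
            _ ≤ 2 * (β * d) := by linarith
        have hdiff := exp_diff_le (β * x i + β * y j) (β * y i + β * x j)
        have hdiff2 : |Real.exp (β * x i + β * y j)
            - Real.exp (β * y i + β * x j)|
            ≤ β * d * (Real.exp (β * x i + β * y j)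
              + Real.exp (β * y i + β * x j)) := by
          calc |Real.exp (β * x i + β * y j) - Real.exp (β * y i + β * x j)|
              ≤ |(β * x i + β * y j) - (β * y i + β * x j)|
                * (Real.exp (β * x i + β * y j)
                  + Real.exp (β * y i + β * x j)) / 2 := hdiff
            _ ≤ 2 * (β * d) * (Real.exp (β * x i + β * y j)
                  + Real.exp (β * y i + β * x j)) / 2 := by
                apply div_le_div_of_nonneg_right ?_ (by norm_num)
                exact mul_le_mul_of_nonneg_right habs (by positivity)
            _ = β * d * (Real.exp (β * x i + β * y j)
                  + Real.exp (β * y i + β * x j)) := by ring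
        calc |(x i - y i) * Real.exp (β * x i + β * y j)
              + y i * (Real.exp (β * x i + β * y j)
                - Real.exp (β * y i + β * x j))|
            ≤ |x i - y i| * Real.exp (β * x i + β * y j)
              + |y i| * |Real.exp (β * x i + β * y j)
                - Real.exp (β * y i + β * x j)| := by
              refine (abs_add_le _ _).trans ?_
              rw [abs_mul, abs_mul, abs_of_pos e1]
          _ ≤ d * Real.exp (β * x i + β * y j)
              + Vmax * (β * d * (Real.exp (β * x i + β * y j)
                + Real.exp (β * y i + β * x j))) := by
              exact add_le_add (mul_le_mul_of_nonneg_right (hdi i) e1.le)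
                (mul_le_mul (hyi i) hdiff2 (abs_nonneg _) hV)
          _ = d * Real.exp (β * x i + β * y j)
              + β * Vmax * d * (Real.exp (β * x i + β * y j)
                + Real.exp (β * y i + β * x j)) := by ring
      calc |∑ i, ∑ j, ((x i - y i) * Real.exp (β * x i + β * y j)
              + y i * (Real.exp (β * x i + β * y j)
                - Real.exp (β * y i + β * x j)))|
          ≤ ∑ i, ∑ j, |(x i - y i) * Real.exp (β * x i + β * y j)
              + y i * (Real.exp (β * x i + β * y j)
                - Real.exp (β * y i + β * x j))| := by
            refine (Finset.abs_sum_le_sum_abs _ _).trans ?_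
            exact Finset.sum_le_sum fun i _ => Finset.abs_sum_le_sum_abs _ _
        _ ≤ ∑ i, ∑ j, (d * Real.exp (β * x i + β * y j)
              + β * Vmax * d * (Real.exp (β * x i + β * y j)
                + Real.exp (β * y i + β * x j))) := by
            exact Finset.sum_le_sum fun i _ =>
              Finset.sum_le_sum fun j _ => hterm i j
        _ = (1 + 2 * (β * Vmax)) * d * (Sx * Sy) := by
            have sum1 : ∑ i : Fin n, ∑ j : Fin n,
                Real.exp (β * x i + β * y j) = Sx * Sy := by
              simp only [Real.exp_add]
              rw [← Finset.sum_mul_sum]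
            have sum2 : ∑ i : Fin n, ∑ j : Fin n,
                Real.exp (β * y i + β * x j) = Sx * Sy := by
              simp only [Real.exp_add]
              rw [← Finset.sum_mul_sum]
              exact mul_comm _ _
            have hsplit : ∑ i : Fin n, ∑ j : Fin n,
                (d * Real.exp (β * x i + β * y j)
                  + β * Vmax * d * (Real.exp (β * x i + β * y j)
                    + Real.exp (β * y i + β * x j)))
                = d * (∑ i : Fin n, ∑ j : Fin n, Real.exp (β * x i + β * y j))
                  + β * Vmax * d *
                    ((∑ i : Fin n, ∑ j : Fin n, Real.exp (β * x i + β * y j))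
                    + (∑ i : Fin n, ∑ j : Fin n, Real.exp (β * y i + β * x j))) := by
              simp only [Finset.sum_add_distrib, Finset.mul_sum, mul_add]
            rw [hsplit, sum1, sum2]
            ring
    have key : |(∑ i, x i * Real.exp (β * x i)) / Sx
        - (∑ i, y i * Real.exp (β * y i)) / Sy| ≤ (1 + 2 * (β * Vmax)) * d := by
      rw [div_sub_div _ _ hSxpos.ne' hSypos.ne', abs_div,
        abs_of_pos (mul_pos hSxpos hSypos), div_le_iff₀ (mul_pos hSxpos hSypos)]
      calc |(∑ i, x i * Real.exp (β * x i)) * Sy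
            - Sx * ∑ i, y i * Real.exp (β * y i)|
          = |(∑ i, x i * Real.exp (β * x i)) * Sy
            - (∑ i, y i * Real.exp (β * y i)) * Sx| := by
            rw [mul_comm Sx (∑ i, y i * Real.exp (β * y i))]
        _ ≤ (1 + 2 * (β * Vmax)) * d * (Sx * Sy) := hnum
    refine key.trans ?_
    apply mul_le_mul_of_nonneg_right _ hd0
    have h1 : (1:ℝ) ≤ Real.sqrt n := by
      rw [show (1:ℝ) = Real.sqrt 1 from (Real.sqrt_one).symm]
      exact Real.sqrt_le_sqrt (by exact_mod_cast hn)
    have h2 : (2:ℝ) ≤ n := by exact_mod_cast hn2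
    nlinarith [mul_nonneg hβ.le hV]
end

section
/- Let S be a nonempty finite set and A a nonempty finite set, and let P : S × A → PMF(S) be an arbitrary transition function assigning to each state-action pair a probability mass function over S. Then there exist m ∈ ℕ, functions f₁, …, f_m : S → S, and a map g : A → PMF(Fin m) such that for all s, s' ∈ S and a ∈ A, P(s,a)(s') = Σ_{i=1}^m g(a)(i) · 1[fᵢ(s) = s']. That is, any finite MDP's transition probabilities can be decomposed into a state-independent distribution over a finite set of deterministic functions. (Claim 1 of the paper.) -/
open scoped ENNReal

/-- **Claim 1.** In a finite MDP, the transition probabilities can be expressed as a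
state-independent distribution over a finite set of deterministic functions: there
exist `m`, functions `f₁,…,f_m : S → S`, and `g : A → PMF (Fin m)` with
`P(s,a)(s') = Σᵢ g(a)(i) · 1[fᵢ(s) = s']`. -/
theorem finite_mdp_deterministic_decomposition
    {S A : Type*} [Fintype S] [Nonempty S] [Fintype A] [Nonempty A] [DecidableEq S]
    (P : S → A → PMF S) :
    ∃ (m : ℕ) (f : Fin m → S → S) (g : A → PMF (Fin m)),
      ∀ (s s' : S) (a : A),
        P s a s' = ∑ i : Fin m, g a i * (if f i s = s' then 1 else 0) := by
  classical
  set m := Fintype.card (S → S) with hm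
  let e : Fin m ≃ (S → S) := (Fintype.equivFin (S → S)).symm
  have hones : ∀ (t : S) (a : A), ∑ y : S, P t a y = 1 := by
    intro t a
    have := (P t a).tsum_coe
    rwa [tsum_fintype] at this
  have hsum : ∀ a : A, ∑ i : Fin m, ∏ t, P t a (e i t) = 1 := by
    intro a
    rw [Equiv.sum_comp e (fun h : S → S => ∏ t, P t a (h t))]
    rw [← Fintype.piFinset_univ, ← Finset.prod_univ_sum]
    simp [hones]
  refine ⟨m, fun i => e i, fun a => PMF.ofFintype _ (hsum a), ?_⟩
  intro s s' a
  simp only [PMF.ofFintype_apply]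
  -- rewrite the RHS sum over Fin m as a sum over all functions
  rw [Equiv.sum_comp e
    (fun h : S → S => (∏ t, P t a (h t)) * (if h s = s' then 1 else 0))]
  -- auxiliary function
  have key : ∀ h : S → S,
      (∏ t, P t a (h t)) * (if h s = s' then 1 else 0)
        = ∏ t, (P t a (h t) * (if t = s then (if h t = s' then 1 else 0) else 1)) := by
    intro h
    rw [Finset.prod_mul_distrib]
    congr 1
    rw [Finset.prod_ite_eq' Finset.univ s (fun t => if h t = s' then (1:ℝ≥0∞) else 0)]
    simp
  simp only [key]
  have hps := Finset.prod_univ_sum (fun _ : S => (Finset.univ : Finset S))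
    (fun t y => (P t a) y * if t = s then (if y = s' then (1:ℝ≥0∞) else 0) else 1)
  rw [Fintype.piFinset_univ] at hps
  rw [← hps]
  have : ∀ t : S, ∑ y : S, (P t a y * (if t = s then (if y = s' then (1:ℝ≥0∞) else 0) else 1))
      = if t = s then P s a s' else 1 := by
    intro t
    by_cases ht : t = s
    · subst ht
      simp [Finset.sum_ite_eq' Finset.univ s' (fun y => P t a y), mul_ite, mul_one, mul_zero]
    · simp [ht, hones]
  simp only [this]
  rw [Finset.prod_ite_eq' Finset.univ s (fun _ => P s a s')]
  simp
end

section
/- Let K ≥ 0 and Δ ≥ 0 be real numbers, and define T, T̂ : ℝ → ℝ by T(s) = K·s and T̂(s) = K·s + Δ. Then for every n ≥ 1 and every s ∈ ℝ, |Tⁿ(s) − T̂ⁿ(s)| = Δ·Σ_{i=0}^{n−1} K^i, where Tⁿ and T̂ⁿ denote n-fold composition. In particular the multi-step prediction error bound of Theorem 1 is tight for deterministic linear models. (Claim 2, part a of the paper.) -/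
lemma iter_lin (K Δ : ℝ) (n : ℕ) (s : ℝ) :
    (fun x : ℝ => K * x + Δ)^[n] s = K ^ n * s + Δ * ∑ i ∈ Finset.range n, K ^ i := by
  induction n with
  | zero => simp
  | succ n ih =>
    rw [Function.iterate_succ_apply', ih, geom_sum_succ]
    ring

/-- **Claim 2, part a.** For the linear model `T(s) = K·s` and its `Δ`-shifted
approximation `T̂(s) = K·s + Δ`, the `n`-step prediction error is exactly
`Δ·Σ_{i<n} Kⁱ`; hence the bound of Theorem 1 is tight for deterministic linear
models. -/
theorem linear_model_multistep_error_tight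
    (K Δ : ℝ) (hK : 0 ≤ K) (hΔ : 0 ≤ Δ) (n : ℕ) (hn : 1 ≤ n) (s : ℝ) :
    |(fun x : ℝ => K * x)^[n] s - (fun x : ℝ => K * x + Δ)^[n] s| =
      Δ * ∑ i ∈ Finset.range n, K ^ i := by
  have h0 : (fun x : ℝ => K * x)^[n] s = K ^ n * s := by
    have := iter_lin K 0 n s
    simpa using this
  rw [h0, iter_lin]
  have : K ^ n * s - (K ^ n * s + Δ * ∑ i ∈ Finset.range n, K ^ i)
      = -(Δ * ∑ i ∈ Finset.range n, K ^ i) := by ring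
  rw [this, abs_neg, abs_of_nonneg]
  positivity
end

section
/- Let K ≥ 0, Δ ≥ 0, K_R ≥ 0, and γ ∈ [0,1) with γ·K < 1. Define T(s) = K·s, T̂(s) = K·s + Δ, and R(s) = K_R·s on ℝ, and the values v(s) = Σ_{n=0}^∞ γⁿ·R(Tⁿ(s)) and v̂(s) = Σ_{n=0}^∞ γⁿ·R(T̂ⁿ(s)) (both series converge under the stated hypotheses at s = 0). Then |v(0) − v̂(0)| = γ·K_R·Δ / ((1−γ)(1−γ·K)). In particular the value-error bound of Theorem 2 is tight for linear deterministic models with linear rewards. (Claim 2, part b of the paper.) -/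
/-!
The exact model `T` fixes `0`, so `v(0) = 0`. The shifted model gives
`T̂ⁿ(0) = Δ (1 + K + ⋯ + K^{n-1})`, hence `γⁿ T̂ⁿ(0) = Δ ∑_{i<n} (γK)ⁱ γ^{n-i}`: these are the
coefficients of the Cauchy product of the geometric series `∑ (γK)ⁱ` and `γ ∑ γʲ`, so
`v̂(0) = K_R Δ γ / ((1 - γ)(1 - γK))`.
-/

open Finset

theorem iterate_mul_add_zero {R : Type*} [CommSemiring R] (a b : R) (n : ℕ) :
    (fun x : R => a * x + b)^[n] 0 = b * ∑ i ∈ range n, a ^ i := by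
  induction n with
  | zero => simp
  | succ n ih =>
    rw [Function.iterate_succ_apply', ih, geom_sum_succ]
    ring

theorem hasSum_sum_range_pow_mul_pow_sub {𝕜 : Type*} [NormedField 𝕜] [CompleteSpace 𝕜]
    {x y : 𝕜} (hx : ‖x‖ < 1) (hy : ‖y‖ < 1) :
    HasSum (fun n => ∑ i ∈ range n, x ^ i * y ^ (n - i)) (y / ((1 - x) * (1 - y))) := by
  have hcauchy := hasSum_sum_range_mul_of_summable_norm
    (summable_norm_geometric_of_norm_lt_one hx) (summable_norm_geometric_of_norm_lt_one hy)
  rw [tsum_geometric_of_norm_lt_one hx, tsum_geometric_of_norm_lt_one hy] at hcauchy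
  rw [← hasSum_nat_add_iff' 1, sum_range_one, range_zero, sum_empty, sub_zero,
    div_eq_mul_inv, mul_inv]
  refine (hcauchy.mul_left y).congr_fun fun n => ?_
  rw [mul_sum]
  refine sum_congr rfl fun i hi => ?_
  rw [Nat.sub_add_comm (mem_range_succ_iff.mp hi), pow_succ]
  ring

/-- **Claim 2, part b.** For the linear model `T(s) = K·s`, its `Δ`-shifted
approximation `T̂(s) = K·s + Δ`, and the linear reward `R(s) = K_R·s`, the values
`v(s) = Σₙ γⁿ R(Tⁿ(s))` and `v̂(s) = Σₙ γⁿ R(T̂ⁿ(s))` satisfy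
`|v(0) − v̂(0)| = γ·K_R·Δ/((1−γ)(1−γK))`; hence the bound of Theorem 2 is tight. -/
theorem linear_model_value_error_tight
    (K Δ KR γ : ℝ) (hK : 0 ≤ K) (hΔ : 0 ≤ Δ) (hKR : 0 ≤ KR)
    (hγ0 : 0 ≤ γ) (hγ1 : γ < 1) (hγK : γ * K < 1) :
    |(∑' n : ℕ, γ ^ n * (KR * (fun x : ℝ => K * x)^[n] 0)) -
     (∑' n : ℕ, γ ^ n * (KR * (fun x : ℝ => K * x + Δ)^[n] 0))| =
      γ * KR * Δ / ((1 - γ) * (1 - γ * K)) := by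
  have hγK0 : 0 ≤ γ * K := mul_nonneg hγ0 hK
  have hT_zero : ∀ n : ℕ, (fun x : ℝ => K * x)^[n] 0 = 0 :=
    Function.iterate_fixed (mul_zero K)
  have hT_hat_term : ∀ n : ℕ, γ ^ n * (KR * (fun x : ℝ => K * x + Δ)^[n] 0) =
      KR * Δ * ∑ i ∈ range n, (γ * K) ^ i * γ ^ (n - i) := by
    intro n
    simp only [iterate_mul_add_zero, mul_sum]
    refine sum_congr rfl fun i hi => ?_
    rw [← _root_.pow_mul_pow_sub γ (mem_range.mp hi).le]
    ring
  have hv_hat := (hasSum_sum_range_pow_mul_pow_sub (x := γ * K) (y := γ)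
    (by rwa [Real.norm_of_nonneg hγK0]) (by rwa [Real.norm_of_nonneg hγ0])).mul_left (KR * Δ)
  simp only [hT_zero, mul_zero, tsum_zero, zero_sub, abs_neg, tsum_congr hT_hat_term,
    hv_hat.tsum_eq]
  rw [abs_of_nonneg (by have := sub_pos.mpr hγ1; have := sub_pos.mpr hγK; positivity)]
  ring
end
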